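/- Let F be a distribution function with left-continuous inverse F⁻¹, and define σ²(u, 1-v) = ∫_u^{1-v} ∫_u^{1-v} (s∧t - st) dF⁻¹(s) dF⁻¹(t) for 0 ≤ u < 1-v ≤ 1. Then for any nondegenerate F, limsup_{u,v ↓ 0} [ u (F⁻¹(u))² + v (F⁻¹(1-v))² ] / σ²(u, 1-v) < ∞. -/

import Mathlib

/-!
The kernel `min s t - s * t` is at least `a * (1 - b)` on `[a, b]²` and nonnegative on `[0, 1]²`,
while `ν [a, b) = F⁻¹ b - F⁻¹ a`; hence `σ²(u, 1 - v) ≥ a (1 - b) (F⁻¹ b - F⁻¹ a)²` for every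
`[a, b] ⊆ [u, 1 - v]`. Fix `p < q` with `F⁻¹ p < F⁻¹ q`. The box `[p, q]` bounds `σ²` below by a
constant `c > 0`, the boxes `[u, p]` and `[q, 1 - v]` control `u (F⁻¹ u - F⁻¹ p)²` and
`v (F⁻¹ (1 - v) - F⁻¹ q)²`, and `x² ≤ 2 (x - y)² + 2 y²` together with `y² ≤ (y² / c) σ²`
bounds the tails.
-/

open MeasureTheory Set Function

section BoxBound

variable {α : Type*} [MeasurableSpace α] {ν : Measure α} {s t : Set α}

theorem mul_measureReal_sq_le_setIntegral_setIntegral {f : α → α → ℝ} {c : ℝ}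
    (hs : MeasurableSet s) (ht : MeasurableSet t) (hst : s ⊆ t) (hνt : ν t ≠ ⊤)
    (hf : Integrable (uncurry f) ((ν.restrict t).prod (ν.restrict t)))
    (hf_nonneg : ∀ x ∈ t, ∀ y ∈ t, 0 ≤ f x y) (hc : ∀ x ∈ s, ∀ y ∈ s, c ≤ f x y) :
    c * ν.real s ^ 2 ≤ ∫ x in t, ∫ y in t, f x y ∂ν ∂ν := by
  have : IsFiniteMeasure (ν.restrict t) := isFiniteMeasure_restrict.mpr hνt
  have hνs : ν s ≠ ⊤ := ne_top_of_le_ne_top hνt (measure_mono hst)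
  set g : α → ℝ := fun x ↦ ∫ y in t, f x y ∂ν
  have hg : IntegrableOn g t ν := hf.integral_prod_left
  have hg_nonneg : 0 ≤ᵐ[ν.restrict t] g :=
    (ae_restrict_iff' ht).mpr (.of_forall fun x hx ↦ setIntegral_nonneg ht (hf_nonneg x hx))
  have hg_lower : ∀ᵐ x ∂ν.restrict s, c * ν.real s ≤ g x := by
    filter_upwards [ae_restrict_of_ae_restrict_of_subset hst hf.prod_right_ae,
      ae_restrict_mem hs] with x (hfx : IntegrableOn (f x) t ν) hx
    calc c * ν.real s = ∫ _ in s, c ∂ν := by rw [setIntegral_const, smul_eq_mul, mul_comm]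
      _ ≤ ∫ y in s, f x y ∂ν :=
        setIntegral_mono_on (integrableOn_const hνs) (hfx.mono_set hst) hs (hc x hx)
      _ ≤ g x := setIntegral_mono_set hfx
        ((ae_restrict_iff' ht).mpr (.of_forall (hf_nonneg x (hst hx)))) hst.eventuallyLE
  calc c * ν.real s ^ 2 = ∫ _ in s, c * ν.real s ∂ν := by
        rw [setIntegral_const, smul_eq_mul]; ring
    _ ≤ ∫ x in s, g x ∂ν :=
      setIntegral_mono_ae_restrict (integrableOn_const hνs) (hg.mono_set hst) hg_lower
    _ ≤ ∫ x in t, g x ∂ν := setIntegral_mono_set hg hg_nonneg hst.eventuallyLE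

theorem integrable_uncurry_restrict_prod_of_continuousOn [TopologicalSpace α]
    [OpensMeasurableSpace α] [SecondCountableTopology α] [T2Space α] {f : α → α → ℝ} {k : Set α}
    (hk : IsCompact k) (htk : t ⊆ k) (hνt : ν t ≠ ⊤) (hf : ContinuousOn (uncurry f) (k ×ˢ k)) :
    Integrable (uncurry f) ((ν.restrict t).prod (ν.restrict t)) := by
  have : IsFiniteMeasure (ν.restrict t) := isFiniteMeasure_restrict.mpr hνt
  have hself : (ν.restrict t).restrict t = ν.restrict t := Measure.restrict_restrict_of_subset subset_rfl
  rw [← hself, Measure.prod_restrict]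
  exact ((hf.integrableOn_compact (μ := (ν.restrict t).prod (ν.restrict t)) (hk.prod hk)).mono_set (prod_mono htk htk))

end BoxBound

theorem mul_one_sub_le_min_sub_mul {a b s t : ℝ} (ha : 0 ≤ a) (hb : b ≤ 1) (hs : s ∈ Icc a b)
    (ht : t ∈ Icc a b) : a * (1 - b) ≤ min s t - s * t := by
  obtain ⟨has, hsb⟩ := hs
  obtain ⟨hat, htb⟩ := ht
  rcases le_total s t with hst | hts
  · rw [min_eq_left hst]; nlinarith
  · rw [min_eq_right hts]; nlinarith

theorem mul_one_sub_mul_sq_sub_le_integral_min_sub_mul (Finv : ℝ → ℝ)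
    (hmono : MonotoneOn Finv (Ioo 0 1)) (ν : Measure ℝ)
    (hν : ∀ a b, 0 < a → a ≤ b → b < 1 → ν (Ico a b) = ENNReal.ofReal (Finv b - Finv a))
    {u w a b : ℝ} (hu : 0 < u) (hua : u ≤ a) (hab : a ≤ b) (hbw : b ≤ w) (hw : w < 1) :
    a * (1 - b) * (Finv b - Finv a) ^ 2
      ≤ ∫ s in Ico u w, ∫ t in Ico u w, (min s t - s * t) ∂ν ∂ν := by
  have ha : 0 < a := hu.trans_le hua
  have hb : b < 1 := hbw.trans_lt hw
  have hFab : 0 ≤ Finv b - Finv a :=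
    sub_nonneg.2 (hmono ⟨ha, hab.trans_lt hb⟩ ⟨ha.trans_le hab, hb⟩ hab)
  have hνab : ν.real (Ico a b) = Finv b - Finv a := by
    rw [measureReal_def, hν a b ha hab hb, ENNReal.toReal_ofReal hFab]
  have hνuw : ν (Ico u w) ≠ ⊤ := by
    rw [hν u w hu (hua.trans (hab.trans hbw)) hw]; exact ENNReal.ofReal_ne_top
  rw [← hνab]
  refine mul_measureReal_sq_le_setIntegral_setIntegral measurableSet_Ico measurableSet_Ico
    (Ico_subset_Ico hua hbw) hνuw ?_ ?_ ?_
  · refine integrable_uncurry_restrict_prod_of_continuousOn (isCompact_Icc (a := 0) (b := 1))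
      (Ico_subset_Icc_self.trans (Icc_subset_Icc hu.le hw.le)) hνuw (Continuous.continuousOn ?_)
    exact (continuous_fst.min continuous_snd).sub (continuous_fst.mul continuous_snd)
  · intro s hs t ht
    simpa using mul_one_sub_le_min_sub_mul le_rfl le_rfl
      (Icc_subset_Icc hu.le hw.le (Ico_subset_Icc_self hs))
      (Icc_subset_Icc hu.le hw.le (Ico_subset_Icc_self ht))
  · intro s hs t ht
    exact mul_one_sub_le_min_sub_mul ha.le hb.le (Ico_subset_Icc_self hs) (Ico_subset_Icc_self ht)

theorem mul_sq_le_of_mul_mul_sub_sq_le {w x y κ c σ : ℝ} (hκ : 0 < κ) (hc : 0 < c) (hw : 0 ≤ w)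
    (hw1 : w ≤ 1) (htail : κ * w * (x - y) ^ 2 ≤ σ) (hbulk : c ≤ σ) :
    w * x ^ 2 ≤ (2 / κ + 2 * y ^ 2 / c) * σ := by
  have htail' : w * (x - y) ^ 2 ≤ σ / κ := by rw [le_div_iff₀ hκ]; linarith
  have hbulk' : 1 ≤ σ / c := (one_le_div hc).2 hbulk
  calc w * x ^ 2 ≤ 2 * (w * (x - y) ^ 2) + 2 * y ^ 2 * w := by
        nlinarith [mul_nonneg hw (sq_nonneg (x - 2 * y))]
    _ ≤ 2 * (σ / κ) + 2 * y ^ 2 * (σ / c) := by gcongr; linarith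
    _ = (2 / κ + 2 * y ^ 2 / c) * σ := by ring

theorem winsorized_tail_dominated_by_truncated_variance
    (Finv : ℝ → ℝ) (hmono : MonotoneOn Finv (Set.Ioo 0 1))
    (hnondeg : ∃ p q, 0 < p ∧ p < q ∧ q < 1 ∧ Finv p < Finv q)
    (ν : Measure ℝ)
    (hν : ∀ a b, 0 < a → a ≤ b → b < 1 →
      ν (Set.Ico a b) = ENNReal.ofReal (Finv b - Finv a))
    (σ2 : ℝ → ℝ → ℝ)
    (hσ2 : ∀ u v, σ2 u v
      = ∫ s in Set.Ico u (1 - v), ∫ t in Set.Ico u (1 - v), (min s t - s * t) ∂ν ∂ν) :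
    ∃ C M : ℝ, 0 < M ∧ ∀ u v, 0 < u → u < M → 0 < v → v < M →
      u * (Finv u)^2 + v * (Finv (1 - v))^2 ≤ C * σ2 u v := by
  obtain ⟨p, q, hp, hpq, hq, hFpq⟩ := hnondeg
  set c := p * (1 - q) * (Finv q - Finv p) ^ 2
  have hc : 0 < c := mul_pos (mul_pos hp (sub_pos.2 hq)) (pow_pos (sub_pos.2 hFpq) 2)
  refine ⟨(2 / (1 - p) + 2 * Finv p ^ 2 / c) + (2 / q + 2 * Finv q ^ 2 / c), min p (1 - q),
    lt_min hp (sub_pos.2 hq), fun u v hu huM hv hvM ↦ ?_⟩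
  have hup : u < p := huM.trans_le (min_le_left _ _)
  have hvq : v < 1 - q := hvM.trans_le (min_le_right _ _)
  have hbox : ∀ a b, u ≤ a → a ≤ b → b ≤ 1 - v → a * (1 - b) * (Finv b - Finv a) ^ 2 ≤ σ2 u v :=
    fun a b hua hab hbw ↦ (hσ2 u v).symm ▸
      mul_one_sub_mul_sq_sub_le_integral_min_sub_mul Finv hmono ν hν hu hua hab hbw (by linarith)
  have hleft := hbox u p le_rfl hup.le (by linarith)
  have hright := hbox q (1 - v) (by linarith) (by linarith) le_rfl
  have hbulk : c ≤ σ2 u v := hbox p q hup.le hpq.le (by linarith)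
  rw [add_mul]
  exact add_le_add
    (mul_sq_le_of_mul_mul_sub_sq_le (sub_pos.2 (hpq.trans hq)) hc hu.le (by linarith)
      (by linear_combination hleft) hbulk)
    (mul_sq_le_of_mul_mul_sub_sq_le (hp.trans hpq) hc hv.le (by linarith)
      (by linear_combination hright) hbulk)
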